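/- arXiv:math/0112066 — 5 statements merged into one kernel-verified Lean document; each statement's English description precedes it below -/
import Mathlib

section
/- Let Δ be a non-codegenerate d-simplex in ℝ^d with vertices v_0, …, v_d and dual vertices w_0, …, w_d. Then the dual simplex Δ^∘ = conv{w_0,…,w_d} is itself a non-codegenerate d-simplex, its dual simplex is Δ (i.e. the dual vertices of (w_0,…,w_d) are (v_0,…,v_d)), and σ(Δ^∘) = σ(Δ). In particular the map [Δ] ↦ (-1)^{σ(Δ)}[Δ^∘] is an involution on characteristic measures of non-codegenerate simplices. -/
/-!
All barycentric coordinates `λ_j` of the origin are nonzero, since `λ_k = 0` would be a linear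
dependence among the `v_j`, `j ≠ k`. Pairing `∑ λ_j v_j = 0` with `w_k` gives
`λ_k ⟪w_k, v_k⟫ = λ_k - 1`, hence `⟪∑ a_k w_k, v_j⟫ = ∑ a_k - a_j / λ_j` for all
coefficients `a`. So a vanishing combination `∑ a_k w_k` with `∑ a_k = 0`, or with some
`a_i = 0`, has `a = 0`, which makes `Δ°` a non-codegenerate simplex. Since the `v_j` span, the
same formula gives `∑ λ_k w_k = 0`: the origin has the same barycentric coordinates with respect
to `Δ°` as to `Δ`, so `σ(Δ°) = σ(Δ)`; and `(Δ°)° = Δ` because the duality relation is symmetric.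
-/

open MeasureTheory

noncomputable section

/-- `σ(Δ)`: the number of negative barycentric coordinates of the origin with respect to the
vertices of the simplex. -/
def sigmaCount {d : ℕ} (lam : Fin (d + 1) → ℝ) : ℕ :=
  (Finset.univ.filter fun i => lam i < 0).card

section LinearIndependence

variable {R M ι : Type*} [Ring R] [AddCommGroup M] [Module R M] [Fintype ι] [DecidableEq ι]

theorem linearIndependent_subtype_ne_iff {v : ι → M} (k : ι) :
    LinearIndependent R (fun j : {j // j ≠ k} => v j) ↔
      ∀ a : ι → R, a k = 0 → ∑ i, a i • v i = 0 → a = 0 := by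
  change LinearIndepOn R v {j | j ≠ k} ↔ _
  rw [linearIndepOn_iff'']
  constructor
  · intro h a hak hz
    funext i
    rcases eq_or_ne i k with rfl | hik
    · exact hak
    refine h (Finset.univ.erase k) a (fun j => Finset.ne_of_mem_erase) (by simpa using hak) ?_ i
      (by simpa using hik)
    rwa [Finset.sum_erase _ (by simp [hak])]
  · intro h t a hts hat hz i _
    have hak : a k = 0 := hat k fun hkt => hts hkt rfl
    refine congrFun (h a hak ?_) i
    rwa [← Finset.sum_subset (Finset.subset_univ t) fun j _ hjt => by simp [hat j hjt]]

theorem ne_zero_of_linearIndependent_subtype_ne [Nontrivial R] {v : ι → M} {lam : ι → R}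
    {k : ι} (hli : LinearIndependent R (fun j : {j // j ≠ k} => v j))
    (h1 : ∑ i, lam i = 1) (h0 : ∑ i, lam i • v i = 0) : lam k ≠ 0 := fun hk => by
  simp [(linearIndependent_subtype_ne_iff k).1 hli lam hk h0] at h1

end LinearIndependence

section DualVertices

variable {ι E : Type*} [NormedAddCommGroup E] [InnerProductSpace ℝ E] {v w : ι → E}

def IsDualFamily (w v : ι → E) : Prop :=
  ∀ k, ∀ j ≠ k, inner ℝ (w k) (v j) = 1

theorem IsDualFamily.symm (hw : IsDualFamily w v) : IsDualFamily v w := fun k j hjk => by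
  rw [real_inner_comm]
  exact hw j k hjk.symm

variable [Fintype ι] [DecidableEq ι] {lam : ι → ℝ}

theorem inner_sum_smul_right_of_inner_eq_one {u : ι → E} {x : E} (a : ι → ℝ) (j : ι)
    (h : ∀ k ≠ j, inner ℝ x (u k) = 1) :
    inner ℝ x (∑ k, a k • u k) = ∑ k, a k - a j + a j * inner ℝ x (u j) := by
  simp only [inner_sum, real_inner_smul_right]
  rw [← Finset.add_sum_erase _ _ (Finset.mem_univ j),
    ← Finset.sum_erase_eq_sub (Finset.mem_univ j), Finset.sum_congr rfl fun k hk => by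
      rw [h k (Finset.ne_of_mem_erase hk), mul_one]]
  ring

theorem mul_inner_dual_self (hw : IsDualFamily w v) (h1 : ∑ i, lam i = 1)
    (h0 : ∑ i, lam i • v i = 0) (j : ι) : lam j * inner ℝ (w j) (v j) = lam j - 1 := by
  have h := inner_sum_smul_right_of_inner_eq_one lam j (hw j)
  rw [h0, inner_zero_right, h1] at h
  linarith

theorem inner_sum_smul_dual (hw : IsDualFamily w v) (h1 : ∑ i, lam i = 1)
    (h0 : ∑ i, lam i • v i = 0) {j : ι} (hj : lam j ≠ 0) (a : ι → ℝ) :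
    inner ℝ (∑ k, a k • w k) (v j) = ∑ k, a k - a j / lam j := by
  rw [real_inner_comm, inner_sum_smul_right_of_inner_eq_one a j (hw.symm j),
    real_inner_comm (w j)]
  field_simp
  linear_combination a j * mul_inner_dual_self hw h1 h0 j

theorem eq_zero_of_sum_smul_dual_eq_zero (hw : IsDualFamily w v)
    (h1 : ∑ i, lam i = 1) (h0 : ∑ i, lam i • v i = 0) (hne : ∀ j, lam j ≠ 0) {a : ι → ℝ}
    (hs : ∑ k, a k = 0) (hz : ∑ k, a k • w k = 0) : a = 0 := by
  funext j
  have h := inner_sum_smul_dual hw h1 h0 (hne j) a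
  rw [hz, inner_zero_left, hs, zero_sub, zero_eq_neg, div_eq_zero_iff] at h
  exact h.resolve_right (hne j)

theorem affineIndependent_dual (hw : IsDualFamily w v)
    (h1 : ∑ i, lam i = 1) (h0 : ∑ i, lam i • v i = 0) (hne : ∀ j, lam j ≠ 0) :
    AffineIndependent ℝ w :=
  (affineIndependent_iff_of_fintype (k := ℝ) w).2 fun a hs hz => by
    rw [Finset.weightedVSub_eq_linear_combination _ hs] at hz
    exact congrFun (eq_zero_of_sum_smul_dual_eq_zero hw h1 h0 hne hs hz)

theorem linearIndependent_dual_subtype_ne (hw : IsDualFamily w v)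
    (h1 : ∑ i, lam i = 1) (h0 : ∑ i, lam i • v i = 0) (hne : ∀ j, lam j ≠ 0) (k : ι) :
    LinearIndependent ℝ (fun j : {j // j ≠ k} => w j) := by
  refine (linearIndependent_subtype_ne_iff k).2 fun a hak hz => ?_
  have hs : ∑ i, a i = 0 := by
    simpa [hz, hak] using (inner_sum_smul_dual hw h1 h0 (hne k) a).symm
  exact eq_zero_of_sum_smul_dual_eq_zero hw h1 h0 hne hs hz

theorem sum_smul_dual_eq_zero [FiniteDimensional ℝ E] (hw : IsDualFamily w v)
    (h1 : ∑ i, lam i = 1) (h0 : ∑ i, lam i • v i = 0) (hne : ∀ j, lam j ≠ 0) {k : ι}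
    (hli : LinearIndependent ℝ (fun j : {j // j ≠ k} => v j))
    (hcard : Fintype.card {j // j ≠ k} = Module.finrank ℝ E) :
    ∑ i, lam i • w i = 0 :=
  InnerProductSpace.ext_inner_right_basis (basisOfLinearIndependentOfCardEqFinrank' _ hli hcard)
    fun j => by
      rw [coe_basisOfLinearIndependentOfCardEqFinrank', inner_sum_smul_dual hw h1 h0 (hne j), h1,
        div_self (hne j), sub_self, inner_zero_left]

theorem eq_of_sum_smul_dual_eq_zero (hw : IsDualFamily w v)
    (h1 : ∑ i, lam i = 1) (h0 : ∑ i, lam i • v i = 0) (hne : ∀ j, lam j ≠ 0)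
    (hlamw : ∑ i, lam i • w i = 0) {mu : ι → ℝ} (hmu1 : ∑ i, mu i = 1)
    (hmu0 : ∑ i, mu i • w i = 0) : mu = lam := by
  refine sub_eq_zero.1 (eq_zero_of_sum_smul_dual_eq_zero hw h1 h0 hne ?_ ?_)
  · simp [Finset.sum_sub_distrib, hmu1, h1]
  · simp [sub_smul, Finset.sum_sub_distrib, hmu0, hlamw]

end DualVertices

theorem dual_simplex_involution_general
    {d : ℕ}
    (v w : Fin (d + 1) → EuclideanSpace ℝ (Fin d))
    -- `Δ` is non-codegenerate
    (hncd : ∀ k : Fin (d + 1),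
      LinearIndependent ℝ (fun j : {j : Fin (d + 1) // j ≠ k} => v j.1))
    -- `w` are the dual vertices of `Δ`
    (hw : ∀ k, ∀ j ≠ k, inner ℝ (w k) (v j) = (1 : ℝ))
    -- `lam` are the barycentric coordinates of the origin with respect to `v`
    (lam : Fin (d + 1) → ℝ)
    (hlam1 : ∑ k, lam k = 1)
    (hlam0 : ∑ k, lam k • v k = 0) :
    -- `Δ° = conv {w 0, …, w d}` is a `d`-simplex
    AffineIndependent ℝ w ∧
    -- `Δ°` is non-codegenerate
    (∀ k : Fin (d + 1),
      LinearIndependent ℝ (fun j : {j : Fin (d + 1) // j ≠ k} => w j.1)) ∧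
    -- the dual vertices of `(w 0, …, w d)` are `(v 0, …, v d)`, i.e. `(Δ°)° = Δ`
    (∀ k, ∀ j ≠ k, inner ℝ (v k) (w j) = (1 : ℝ)) ∧
    -- `σ(Δ°) = σ(Δ)`: for any barycentric coordinates `mu` of the origin with respect to `w`
    (∀ mu : Fin (d + 1) → ℝ, (∑ k, mu k = 1) → (∑ k, mu k • w k = 0) →
      sigmaCount mu = sigmaCount lam) := by
  have hne : ∀ k, lam k ≠ 0 := fun k =>
    ne_zero_of_linearIndependent_subtype_ne (hncd k) hlam1 hlam0
  have hlamw : ∑ k, lam k • w k = 0 :=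
    sum_smul_dual_eq_zero hw hlam1 hlam0 hne (hncd 0) (by simp)
  refine ⟨affineIndependent_dual hw hlam1 hlam0 hne,
    linearIndependent_dual_subtype_ne hw hlam1 hlam0 hne, IsDualFamily.symm hw,
    fun mu hmu1 hmu0 => ?_⟩
  rw [eq_of_sum_smul_dual_eq_zero hw hlam1 hlam0 hne hlamw hmu1 hmu0]

/-- the dual simplex of a non-codegenerate `d`-simplex is again a
non-codegenerate `d`-simplex, its dual simplex is the original one (the dual vertices of
`w₀, …, w_d` are `v₀, …, v_d`), and `σ(Δ°) = σ(Δ)`; hence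
`[Δ] ↦ (-1)^{σ(Δ)} [Δ°]` is an involution. -/
theorem dual_simplex_involution
    {d : ℕ}
    (v w : Fin (d + 1) → EuclideanSpace ℝ (Fin d))
    -- `Δ = conv {v 0, …, v d}` is a `d`-simplex
    (haff : AffineIndependent ℝ v)
    -- `Δ` is non-codegenerate
    (hncd : ∀ k : Fin (d + 1),
      LinearIndependent ℝ (fun j : {j : Fin (d + 1) // j ≠ k} => v j.1))
    -- `w` are the dual vertices of `Δ`
    (hw : ∀ k, ∀ j ≠ k, inner ℝ (w k) (v j) = (1 : ℝ))
    -- `lam` are the barycentric coordinates of the origin with respect to `v`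
    (lam : Fin (d + 1) → ℝ)
    (hlam1 : ∑ k, lam k = 1)
    (hlam0 : ∑ k, lam k • v k = 0) :
    -- `Δ° = conv {w 0, …, w d}` is a `d`-simplex
    AffineIndependent ℝ w ∧
    -- `Δ°` is non-codegenerate
    (∀ k : Fin (d + 1),
      LinearIndependent ℝ (fun j : {j : Fin (d + 1) // j ≠ k} => w j.1)) ∧
    -- the dual vertices of `(w 0, …, w d)` are `(v 0, …, v d)`, i.e. `(Δ°)° = Δ`
    (∀ k, ∀ j ≠ k, inner ℝ (v k) (w j) = (1 : ℝ)) ∧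
    -- `σ(Δ°) = σ(Δ)`: for any barycentric coordinates `mu` of the origin with respect to `w`
    (∀ mu : Fin (d + 1) → ℝ, (∑ k, mu k = 1) → (∑ k, mu k • w k = 0) →
      sigmaCount mu = sigmaCount lam) :=
  dual_simplex_involution_general v w hncd hw lam hlam1 hlam0
end
end

section
/- Let P ⊆ ℝ^d be a convex polytope containing the origin in its interior such that any d extreme points of P are linearly independent. Let Δ_1, …, Δ_n be d-simplices with pairwise disjoint interiors whose union is P and all of whose vertices are extreme points of P (so each Δ_i is non-codegenerate). Then for every point w in the interior of the polar body P^∘ there is exactly one index i with w ∈ Δ_i^∘, namely the unique i for which the origin lies in Δ_i. -/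
/-!
Let `λ` be the barycentric coordinates of the origin with respect to the vertices `b` of a
simplex `Δ`, and `w` the dual vertices. Pairing `0 = ∑ λⱼ bⱼ` with `wₖ` gives
`λₖ (1 - ⟪wₖ, bₖ⟫) = 1`, and from this every `x` is the affine combination
`x = ∑ₖ λₖ (1 - ⟪x, bₖ⟫) wₖ`. In the interior of `P°` we have `⟪x, bₖ⟫ < 1`, so if `0 ∈ Δ`
(all `λₖ ≥ 0`) the coefficients are nonnegative and `x ∈ Δ°`. If instead `λₘ < 0`, then
`⟪wₘ, bₘ⟫ > 1`, so all of `Δ°` lies in the half-space `⟪·, bₘ⟫ ≥ 1`, which misses `x`.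
Since no `λₖ` vanishes, a simplex containing the origin contains it in its interior, and
disjointness of the interiors makes that simplex unique.
-/

open scoped InnerProductSpace

theorem Finset.sum_mul_eq_sum_sub_of_eq_one {ι : Type*} [Fintype ι] (c f : ι → ℝ) {k : ι}
    (hf : ∀ j ≠ k, f j = 1) : ∑ j, c j * f j = ∑ j, c j - c k * (1 - f k) := by
  classical
  rw [← Finset.add_sum_erase _ _ (Finset.mem_univ k),
    ← Finset.add_sum_erase _ _ (Finset.mem_univ k),
    Finset.sum_congr rfl fun j hj => by rw [hf j (Finset.ne_of_mem_erase hj), mul_one]]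
  ring

theorem inner_lt_one_of_mem_interior_polar {E : Type*} [NormedAddCommGroup E]
    [InnerProductSpace ℝ E] {P : Set E} {x z : E}
    (hx : x ∈ interior {u : E | ∀ y ∈ P, ⟪u, y⟫_ℝ ≤ 1}) (hz : z ∈ P) : ⟪x, z⟫_ℝ < 1 := by
  rcases eq_or_ne z 0 with rfl | hz0
  · simp
  have hpath : Filter.Tendsto (fun t : ℝ => x + t • z) (nhdsWithin 0 (Set.Ioi 0)) (nhds x) := by
    have hcont : Continuous fun t : ℝ => x + t • z := by fun_prop
    simpa using (hcont.tendsto 0).mono_left nhdsWithin_le_nhds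
  obtain ⟨t, ht_mem, ht_pos⟩ :=
    ((hpath.eventually_mem (mem_interior_iff_mem_nhds.mp hx)).and self_mem_nhdsWithin).exists
  have h := ht_mem z hz
  rw [inner_add_left, real_inner_smul_left, real_inner_self_eq_norm_sq] at h
  have : 0 < t * ‖z‖ ^ 2 := mul_pos ht_pos (by positivity)
  linarith

namespace AffineBasis

variable {ι E : Type*} [Fintype ι] [NormedAddCommGroup E] [InnerProductSpace ℝ E]
  (b : AffineBasis ι ℝ E)

theorem eq_zero_of_forall_inner_eq_zero {z : E} (h : ∀ j, ⟪z, b j⟫_ℝ = 0) : z = 0 := by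
  rw [← inner_self_eq_zero (𝕜 := ℝ)]
  calc ⟪z, z⟫_ℝ = ⟪z, ∑ j, b.coord j z • b j⟫_ℝ := by rw [b.linear_combination_coord_eq_self]
    _ = 0 := by
      simp only [inner_sum, real_inner_smul_right, h, mul_zero, Finset.sum_const_zero]

theorem sum_coord_zero_mul_inner (y : E) : ∑ k, b.coord k 0 * ⟪y, b k⟫_ℝ = 0 := by
  have h := congrArg (⟪y, ·⟫_ℝ) (b.linear_combination_coord_eq_self 0)
  rw [inner_sum, inner_zero_right] at h
  simpa only [real_inner_smul_right] using h

theorem sum_coord_zero_mul_one_sub_inner (x : E) :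
    ∑ k, b.coord k 0 * (1 - ⟪x, b k⟫_ℝ) = 1 := by
  simp only [mul_one_sub, Finset.sum_sub_distrib, b.sum_coord_apply_eq_one,
    b.sum_coord_zero_mul_inner, sub_zero]

theorem coord_zero_mul_one_sub_inner_eq_one {w : ι → E} (hw : ∀ k, ∀ j ≠ k, ⟪w k, b j⟫_ℝ = 1)
    (k : ι) : b.coord k 0 * (1 - ⟪w k, b k⟫_ℝ) = 1 := by
  have h := b.sum_coord_zero_mul_inner (w k)
  rw [Finset.sum_mul_eq_sum_sub_of_eq_one _ _ (hw k), b.sum_coord_apply_eq_one] at h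
  linarith

theorem zero_mem_interior_convexHull {w : ι → E} (hw : ∀ k, ∀ j ≠ k, ⟪w k, b j⟫_ℝ = 1)
    (h : (0 : E) ∈ convexHull ℝ (Set.range b)) :
    (0 : E) ∈ interior (convexHull ℝ (Set.range b)) := by
  rw [b.convexHull_eq_nonneg_coord] at h
  rw [b.interior_convexHull]
  exact fun k =>
    (h k).lt_of_ne' (left_ne_zero_of_mul_eq_one (b.coord_zero_mul_one_sub_inner_eq_one hw k))

theorem sum_smul_dual_eq {w : ι → E} (hw : ∀ k, ∀ j ≠ k, ⟪w k, b j⟫_ℝ = 1) (x : E) :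
    ∑ k, (b.coord k 0 * (1 - ⟪x, b k⟫_ℝ)) • w k = x := by
  refine sub_eq_zero.mp (b.eq_zero_of_forall_inner_eq_zero fun j => ?_)
  have hdiag := b.coord_zero_mul_one_sub_inner_eq_one hw j
  rw [inner_sub_left, sum_inner]
  simp only [real_inner_smul_left]
  rw [Finset.sum_mul_eq_sum_sub_of_eq_one _ (fun k => ⟪w k, b j⟫_ℝ) fun k hk => hw k j hk.symm,
    b.sum_coord_zero_mul_one_sub_inner]
  linear_combination (⟪x, b j⟫_ℝ - 1) * hdiag

theorem mem_convexHull_dual_iff {w : ι → E} (hw : ∀ k, ∀ j ≠ k, ⟪w k, b j⟫_ℝ = 1) {x : E}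
    (hx : ∀ k, ⟪x, b k⟫_ℝ < 1) :
    x ∈ convexHull ℝ (Set.range w) ↔ (0 : E) ∈ convexHull ℝ (Set.range b) := by
  rw [b.convexHull_eq_nonneg_coord]
  constructor
  · intro hxw m
    by_contra! hm
    have hdiag := b.coord_zero_mul_one_sub_inner_eq_one hw m
    have hhull : convexHull ℝ (Set.range w) ⊆ {y | 1 ≤ ⟪b m, y⟫_ℝ} := by
      refine convexHull_min ?_ (convex_halfSpace_ge (innerₛₗ ℝ (b m)).isLinear 1)
      rintro _ ⟨k, rfl⟩
      rw [Set.mem_ofPred_eq, real_inner_comm]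
      rcases eq_or_ne m k with rfl | hmk
      · nlinarith
      · exact (hw k m hmk).ge
    have := hhull hxw
    rw [Set.mem_ofPred_eq, real_inner_comm] at this
    linarith [hx m]
  · intro h0
    rw [← b.sum_smul_dual_eq hw x]
    exact (convex_convexHull ℝ _).sum_mem (fun k _ => mul_nonneg (h0 k) (by linarith [hx k]))
      (b.sum_coord_zero_mul_one_sub_inner x) fun k _ => subset_convexHull ℝ _ ⟨k, rfl⟩

end AffineBasis

theorem interior_polar_covered_once_general
    {d : ℕ}
    (P : Set (EuclideanSpace ℝ (Fin d)))
    -- containing the origin in its interior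
    (h0 : (0 : EuclideanSpace ℝ (Fin d)) ∈ interior P)
    (n : ℕ)
    (v : Fin n → Fin (d + 1) → EuclideanSpace ℝ (Fin d))
    -- each `Δᵢ = conv {v i 0, …, v i d}` is a `d`-simplex
    (haff : ∀ i, AffineIndependent ℝ (v i))
    -- the simplices have pairwise disjoint interiors
    (hdisj : ∀ i j, i ≠ j → Disjoint (interior (convexHull ℝ (Set.range (v i))))
      (interior (convexHull ℝ (Set.range (v j)))))
    -- and their union is `P`
    (hunion : (⋃ i, convexHull ℝ (Set.range (v i))) = P)
    -- `w i` are the vertices of the dual simplex `Δᵢ°`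
    (w : Fin n → Fin (d + 1) → EuclideanSpace ℝ (Fin d))
    (hw : ∀ i k, ∀ j ≠ k, inner ℝ (w i k) (v i j) = (1 : ℝ)) :
    -- there is a unique simplex containing the origin, and a point of the interior of `P°`
    -- lies in `Δᵢ°` exactly when `Δᵢ` is that simplex
    (∃! i : Fin n, (0 : EuclideanSpace ℝ (Fin d)) ∈ convexHull ℝ (Set.range (v i))) ∧
    ∀ x ∈ interior {u : EuclideanSpace ℝ (Fin d) | ∀ y ∈ P, inner ℝ u y ≤ (1 : ℝ)},
      ∀ i : Fin n,
        (x ∈ convexHull ℝ (Set.range (w i)) ↔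
          (0 : EuclideanSpace ℝ (Fin d)) ∈ convexHull ℝ (Set.range (v i))) := by
  let b : Fin n → AffineBasis (Fin (d + 1)) ℝ (EuclideanSpace ℝ (Fin d)) := fun i =>
    ⟨v i, haff i, (haff i).affineSpan_eq_top_iff_card_eq_finrank_add_one.mpr (by simp)⟩
  obtain ⟨i₀, hi₀⟩ := Set.mem_iUnion.mp (hunion.symm ▸ interior_subset h0 :
    (0 : EuclideanSpace ℝ (Fin d)) ∈ ⋃ i, convexHull ℝ (Set.range (v i)))
  refine ⟨⟨i₀, hi₀, fun j hj => ?_⟩, fun x hx i => ?_⟩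
  · by_contra hj₀
    exact Set.disjoint_left.mp (hdisj j i₀ hj₀) ((b j).zero_mem_interior_convexHull (hw j) hj)
      ((b i₀).zero_mem_interior_convexHull (hw i₀) hi₀)
  · have hvP : ∀ k, v i k ∈ P := fun k =>
      hunion ▸ Set.mem_iUnion_of_mem i (subset_convexHull ℝ _ ⟨k, rfl⟩)
    exact (b i).mem_convexHull_dual_iff (hw i) fun k =>
      inner_lt_one_of_mem_interior_polar hx (hvP k)

/-- let `P` be a convex polytope with the origin in its interior such that any
`d` extreme points of `P` are linearly independent, triangulated by simplices `Δ₁, …, Δₙ`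
whose vertices are extreme points of `P`.  Then every point of the interior of the polar body
`P°` is covered by exactly one dual simplex `Δᵢ°`, namely by the dual of the unique simplex
containing the origin. -/
theorem interior_polar_covered_once
    {d : ℕ} (F : Finset (EuclideanSpace ℝ (Fin d)))
    (P : Set (EuclideanSpace ℝ (Fin d)))
    -- `P` is a convex polytope
    (hP : P = convexHull ℝ (F : Set (EuclideanSpace ℝ (Fin d))))
    -- containing the origin in its interior
    (h0 : (0 : EuclideanSpace ℝ (Fin d)) ∈ interior P)
    -- any `d` (distinct) extreme points of `P` are linearly independent
    (hgen : ∀ g : Fin d → EuclideanSpace ℝ (Fin d), Function.Injective g →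
      (∀ k, g k ∈ Set.extremePoints ℝ P) → LinearIndependent ℝ g)
    (n : ℕ)
    (v : Fin n → Fin (d + 1) → EuclideanSpace ℝ (Fin d))
    -- each `Δᵢ = conv {v i 0, …, v i d}` is a `d`-simplex
    (haff : ∀ i, AffineIndependent ℝ (v i))
    -- all vertices of the simplices are extreme points of `P`
    (hvert : ∀ i k, v i k ∈ Set.extremePoints ℝ P)
    -- the simplices have pairwise disjoint interiors
    (hdisj : ∀ i j, i ≠ j → Disjoint (interior (convexHull ℝ (Set.range (v i))))
      (interior (convexHull ℝ (Set.range (v j)))))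
    -- and their union is `P`
    (hunion : (⋃ i, convexHull ℝ (Set.range (v i))) = P)
    -- `w i` are the vertices of the dual simplex `Δᵢ°`
    (w : Fin n → Fin (d + 1) → EuclideanSpace ℝ (Fin d))
    (hw : ∀ i k, ∀ j ≠ k, inner ℝ (w i k) (v i j) = (1 : ℝ)) :
    -- there is a unique simplex containing the origin, and a point of the interior of `P°`
    -- lies in `Δᵢ°` exactly when `Δᵢ` is that simplex
    (∃! i : Fin n, (0 : EuclideanSpace ℝ (Fin d)) ∈ convexHull ℝ (Set.range (v i))) ∧
    ∀ x ∈ interior {u : EuclideanSpace ℝ (Fin d) | ∀ y ∈ P, inner ℝ u y ≤ (1 : ℝ)},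
      ∀ i : Fin n,
        (x ∈ convexHull ℝ (Set.range (w i)) ↔
          (0 : EuclideanSpace ℝ (Fin d)) ∈ convexHull ℝ (Set.range (v i))) :=
  interior_polar_covered_once_general P h0 n v haff hdisj hunion w hw
end

section
/- Let Δ be a non-codegenerate d-simplex in ℝ^d with vertices v_0, …, v_d, and suppose that for some index i the hyperplane through {v_j : j ≠ i} strictly separates the vertex v_i from the origin (equivalently, the barycentric coordinate of the origin at i is negative). Then the hyperplane H_{v_i} = {w : ⟨w, v_i⟩ = 1} separates the dual simplex Δ^∘ from the origin: every w ∈ Δ^∘ satisfies ⟨w, v_i⟩ ≥ 1. -/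
/-!
Pairing the dependence `∑ λₖ vₖ = 0`, `∑ λₖ = 1` with a dual vertex `wᵢ` gives
`λᵢ (⟨wᵢ, vᵢ⟩ - 1) = -1`, so `λᵢ < 0` forces `⟨wᵢ, vᵢ⟩ > 1`; every other dual vertex has
`⟨wₖ, vᵢ⟩ = 1`, and the half-space `{x | 1 ≤ ⟨x, vᵢ⟩}` is convex.
-/

open Finset
open scoped RealInnerProductSpace

section

variable {E ι : Type*} [NormedAddCommGroup E] [InnerProductSpace ℝ E] [Fintype ι]

theorem mul_inner_sub_one_eq_neg_one_of_sum_smul_eq_zero {v : ι → E} {lam : ι → ℝ}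
    (hlam1 : ∑ k, lam k = 1) (hlam0 : ∑ k, lam k • v k = 0) {i : ι} {u : E}
    (hu : ∀ j ≠ i, ⟪u, v j⟫ = 1) : lam i * (⟪u, v i⟫ - 1) = -1 := by
  have hsum : ∑ k, lam k * (⟪u, v k⟫ - 1) = lam i * (⟪u, v i⟫ - 1) :=
    sum_eq_single i (fun j _ hj => by rw [hu j hj, sub_self, mul_zero])
      (fun h => absurd (mem_univ i) h)
  calc lam i * (⟪u, v i⟫ - 1) = ∑ k, lam k * ⟪u, v k⟫ - ∑ k, lam k := by
        simp only [← hsum, mul_sub, mul_one, sum_sub_distrib]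
    _ = ⟪u, ∑ k, lam k • v k⟫ - 1 := by simp only [inner_sum, real_inner_smul_right, hlam1]
    _ = -1 := by rw [hlam0, inner_zero_right, zero_sub]

theorem one_lt_inner_of_sum_smul_eq_zero_of_neg {v : ι → E} {lam : ι → ℝ}
    (hlam1 : ∑ k, lam k = 1) (hlam0 : ∑ k, lam k • v k = 0) {i : ι} (hi : lam i < 0) {u : E}
    (hu : ∀ j ≠ i, ⟪u, v j⟫ = 1) : 1 < ⟪u, v i⟫ := by
  have := mul_inner_sub_one_eq_neg_one_of_sum_smul_eq_zero hlam1 hlam0 hu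
  nlinarith

end

theorem convexHull_subset_setOf_le_inner {E : Type*} [NormedAddCommGroup E]
    [InnerProductSpace ℝ E] {s : Set E} {y : E} {c : ℝ} (hs : ∀ x ∈ s, c ≤ ⟪x, y⟫) :
    convexHull ℝ s ⊆ {x | c ≤ ⟪x, y⟫} :=
  convexHull_min hs (convex_halfSpace_ge (innerₛₗ ℝ |>.flip y).isLinear c)

theorem dual_simplex_separated_general
    {d : ℕ}
    (v : Fin (d + 1) → EuclideanSpace ℝ (Fin d))
    -- `lam` are the barycentric coordinates of the origin with respect to `v`
    (lam : Fin (d + 1) → ℝ)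
    (hlam1 : ∑ k, lam k = 1)
    (hlam0 : ∑ k, lam k • v k = 0)
    -- the facet hyperplane opposite `v i` strictly separates `v i` from the origin,
    -- i.e. the barycentric coordinate of the origin at `i` is negative
    (i : Fin (d + 1)) (hi : lam i < 0)
    -- `w` are the vertices of the dual simplex `Δ°`
    (w : Fin (d + 1) → EuclideanSpace ℝ (Fin d))
    (hw : ∀ k, ∀ j ≠ k, inner ℝ (w k) (v j) = (1 : ℝ)) :
    -- then every point of `Δ°` satisfies `⟨x, v i⟩ ≥ 1`
    ∀ x ∈ convexHull ℝ (Set.range w), (1 : ℝ) ≤ inner ℝ x (v i) := by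
  intro x hx
  refine convexHull_subset_setOf_le_inner (Set.forall_mem_range.2 fun k => ?_) hx
  by_cases hki : k = i
  · subst hki
    exact (one_lt_inner_of_sum_smul_eq_zero_of_neg hlam1 hlam0 hi (hw k)).le
  · exact (hw k i (Ne.symm hki)).ge

/-- if a facet hyperplane of a non-codegenerate `d`-simplex `Δ` strictly
separates the opposite vertex `v i` from the origin (equivalently, the `i`-th barycentric
coordinate of the origin is negative), then the hyperplane `H_{v i} = {w : ⟨w, v i⟩ = 1}`
separates the dual simplex `Δ°` from the origin: every `w ∈ Δ°` satisfies `⟨w, v i⟩ ≥ 1`. -/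
theorem dual_simplex_separated
    {d : ℕ}
    (v : Fin (d + 1) → EuclideanSpace ℝ (Fin d))
    -- `Δ = conv {v 0, …, v d}` is a `d`-simplex
    (haff : AffineIndependent ℝ v)
    -- `Δ` is non-codegenerate
    (hncd : ∀ k : Fin (d + 1),
      LinearIndependent ℝ (fun j : {j : Fin (d + 1) // j ≠ k} => v j.1))
    -- `lam` are the barycentric coordinates of the origin with respect to `v`
    (lam : Fin (d + 1) → ℝ)
    (hlam1 : ∑ k, lam k = 1)
    (hlam0 : ∑ k, lam k • v k = 0)
    -- the facet hyperplane opposite `v i` strictly separates `v i` from the origin,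
    -- i.e. the barycentric coordinate of the origin at `i` is negative
    (i : Fin (d + 1)) (hi : lam i < 0)
    -- `w` are the vertices of the dual simplex `Δ°`
    (w : Fin (d + 1) → EuclideanSpace ℝ (Fin d))
    (hw : ∀ k, ∀ j ≠ k, inner ℝ (w k) (v j) = (1 : ℝ)) :
    -- then every point of `Δ°` satisfies `⟨x, v i⟩ ≥ 1`
    ∀ x ∈ convexHull ℝ (Set.range w), (1 : ℝ) ≤ inner ℝ x (v i) :=
  dual_simplex_separated_general v lam hlam1 hlam0 i hi w hw
end

section
/- Let C_1, …, C_n ⊆ ℝ^m be polyhedral cones (each being the set of all nonnegative linear combinations of a finite set of vectors), and let α_1, …, α_n be integers such that ∑_{i=1}^n α_i 𝟙_{C_i}(x) = 0 for every x ∈ ℝ^m, where 𝟙_C denotes the characteristic function of C. Then ∑_{i=1}^n α_i 𝟙_{C_i^*}(x) = 0 for every x ∈ ℝ^m, where C^* = {x ∈ ℝ^m : ⟨x, y⟩ ≥ 0 for all y ∈ C} is the dual cone. In other words, the polarity map on characteristic functions of polyhedral cones extends to an involution of the group they span. -/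
/-
For a cone `C`, a point `x` lies in `C*` iff `C` misses the half-space `H = {w | ⟪x, w⟫ ≤ -1}`;
since a finitely generated cone is closed (conic Carathéodory), this happens iff the compact
convex set `C ∩ H ∩ B` is empty, for one large ball `B` chosen for all `Cᵢ` at once. The
indicators of the `Cᵢ ∩ H ∩ B` satisfy the same relation as those of the `Cᵢ`, and the Euler
characteristic of compact convex sets, which is `1` on nonempty ones, respects every linear
relation among their indicators. Hence `∑ αᵢ [Cᵢ ∩ H ∩ B ≠ ∅] = 0`, and together with
`∑ αᵢ = 0` (evaluate at the common apex `0`) this is the claim.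

That the Euler characteristic respects linear relations is proved by induction on dimension.
On `ℝ`, a compact interval is counted by its right endpoint, which is where the indicator
drops just to the right of a point. On `F × ℝ`, the Euler characteristic of the fibre over
`u` is the indicator of the projection to `F` at `u`.
-/

open Set Filter Topology RealInnerProductSpace

section EulerCharacteristic

open Classical

-- Agrees with the Euler characteristic on compact convex sets.
noncomputable def eulerChar {E : Type*} (K : Set E) : ℝ := if K.Nonempty then 1 else 0

def EulerCharFactorsThroughIndicators (E : Type*) [AddCommGroup E] [Module ℝ E]
    [TopologicalSpace E] : Prop :=
  ∀ (ι : Type) [Fintype ι] (K : ι → Set E) (α : ι → ℝ), (∀ i, Convex ℝ (K i)) →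
    (∀ i, IsCompact (K i)) → (∀ x, ∑ i, α i * (K i).indicator (fun _ => 1) x = 0) →
    ∑ i, α i * eulerChar (K i) = 0

lemma eventually_indicator_nhdsGT {I : Set ℝ} (hconv : Convex ℝ I) (hclosed : IsClosed I)
    (c : ℝ) : ∀ᶠ t in 𝓝[>] c, I.indicator (fun _ => (1 : ℝ)) t =
      I.indicator (fun _ => 1) c - if IsGreatest I c then 1 else 0 := by
  by_cases hc : c ∈ I
  · by_cases hgr : IsGreatest I c
    · filter_upwards [self_mem_nhdsWithin] with t (ht : c < t)
      rw [indicator_of_notMem fun htI => (hgr.2 htI).not_gt ht, indicator_of_mem hc, if_pos hgr,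
        sub_self]
    · obtain ⟨b, hbI, hcb⟩ : ∃ b ∈ I, c < b := by
        simpa [IsGreatest, hc, mem_upperBounds] using hgr
      filter_upwards [Ioo_mem_nhdsGT hcb] with t ht
      rw [indicator_of_mem (hconv.ordConnected.out hc hbI (Ioo_subset_Icc_self ht)),
        indicator_of_mem hc, if_neg hgr, sub_zero]
  · filter_upwards [nhdsWithin_le_nhds (hclosed.isOpen_compl.mem_nhds hc)] with t ht
    rw [indicator_of_notMem ht, indicator_of_notMem hc, if_neg fun h : IsGreatest I c => hc h.1,
      sub_zero]

lemma eulerChar_eq_sum_ite_isGreatest {I : Set ℝ} (hI : IsCompact I) {T : Finset ℝ}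
    (hT : I.Nonempty → sSup I ∈ T) :
    eulerChar I = ∑ c ∈ T, if IsGreatest I c then 1 else 0 := by
  rcases I.eq_empty_or_nonempty with rfl | hne
  · simp [eulerChar, IsGreatest]
  · have hgr : ∀ c, IsGreatest I c ↔ sSup I = c :=
      fun c => ⟨fun h => h.csSup_eq, fun h => h ▸ hI.isGreatest_sSup hne⟩
    simp_rw [hgr, Finset.sum_ite_eq, if_pos (hT hne), eulerChar, if_pos hne]

theorem eulerCharFactorsThroughIndicators_real : EulerCharFactorsThroughIndicators ℝ := by
  intro ι _ I α hconv hcomp hrel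
  have hjump : ∀ c, ∑ i, α i * (if IsGreatest (I i) c then 1 else 0) = 0 := by
    intro c
    obtain ⟨t, ht⟩ := (eventually_all.2 fun i =>
      eventually_indicator_nhdsGT (hconv i) (hcomp i).isClosed c).exists
    simpa [ht, mul_sub, Finset.sum_sub_distrib, hrel c] using hrel t
  set T := Finset.univ.image fun i => sSup (I i)
  calc ∑ i, α i * eulerChar (I i)
      = ∑ i, α i * ∑ c ∈ T, if IsGreatest (I i) c then 1 else 0 := by
        refine Finset.sum_congr rfl fun i _ => ?_
        rw [eulerChar_eq_sum_ite_isGreatest (hcomp i)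
          fun _ => Finset.mem_image_of_mem (fun i => sSup (I i)) (Finset.mem_univ i)]
    _ = ∑ c ∈ T, ∑ i, α i * if IsGreatest (I i) c then 1 else 0 := by
        simp_rw [Finset.mul_sum]
        exact Finset.sum_comm
    _ = 0 := Finset.sum_eq_zero fun c _ => hjump c

lemma Convex.prodMk_preimage {F : Type*} [AddCommGroup F] [Module ℝ F] {K : Set (F × ℝ)}
    (hK : Convex ℝ K) (u : F) : Convex ℝ (Prod.mk u ⁻¹' K) := by
  intro t₁ h₁ t₂ h₂ a b ha hb hab
  have := hK h₁ h₂ ha hb hab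
  rwa [Prod.smul_mk, Prod.smul_mk, Prod.mk_add_mk, Convex.combo_self hab] at this

lemma IsCompact.prodMk_preimage {F : Type*} [TopologicalSpace F] [T2Space F] {K : Set (F × ℝ)}
    (hK : IsCompact K) (u : F) : IsCompact (Prod.mk u ⁻¹' K) :=
  (hK.image continuous_snd).of_isClosed_subset (hK.isClosed.preimage (.prodMk_right u))
    fun t ht => ⟨(u, t), ht, rfl⟩

lemma indicator_image_fst_eq_eulerChar {F : Type*} (K : Set (F × ℝ)) (u : F) :
    (Prod.fst '' K).indicator (fun _ => 1) u = eulerChar (Prod.mk u ⁻¹' K) := by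
  have : u ∈ Prod.fst '' K ↔ (Prod.mk u ⁻¹' K).Nonempty :=
    ⟨fun ⟨p, hp, hpu⟩ => ⟨p.2, by rwa [← hpu]⟩, fun ⟨t, ht⟩ => ⟨(u, t), ht, rfl⟩⟩
  simp only [indicator_apply, eulerChar, this]

namespace EulerCharFactorsThroughIndicators

variable {E F : Type*} [AddCommGroup E] [Module ℝ E] [TopologicalSpace E]
  [AddCommGroup F] [Module ℝ F] [TopologicalSpace F]

lemma of_subsingleton [Subsingleton E] : EulerCharFactorsThroughIndicators E := by
  intro ι _ K α _ _ hrel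
  rw [← hrel 0]
  refine Finset.sum_congr rfl fun i _ => ?_
  have : (K i).Nonempty ↔ 0 ∈ K i := ⟨fun ⟨x, hx⟩ => Subsingleton.elim x 0 ▸ hx, fun h => ⟨0, h⟩⟩
  simp only [eulerChar, indicator_apply, this]

lemma of_continuousLinearEquiv (e : E ≃L[ℝ] F) (hF : EulerCharFactorsThroughIndicators F) :
    EulerCharFactorsThroughIndicators E := by
  intro ι _ K α hconv hcomp hrel
  have := hF ι (fun i => e '' K i) α (fun i => (hconv i).linear_image e.toLinearMap)
    (fun i => (hcomp i).image e.continuous) fun y => by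
      simpa [e.image_eq_preimage_symm, indicator_apply] using hrel (e.symm y)
  simpa [eulerChar] using this

lemma prod_real [T2Space F] (hF : EulerCharFactorsThroughIndicators F) :
    EulerCharFactorsThroughIndicators (F × ℝ) := by
  intro ι _ K α hconv hcomp hrel
  have hslice : ∀ u, ∑ i, α i * eulerChar (Prod.mk u ⁻¹' K i) = 0 := fun u =>
    eulerCharFactorsThroughIndicators_real ι _ α (fun i => (hconv i).prodMk_preimage u)
      (fun i => (hcomp i).prodMk_preimage u) fun t => hrel (u, t)
  have := hF ι (fun i => Prod.fst '' K i) α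
    (fun i => (hconv i).linear_image (LinearMap.fst ℝ F ℝ)) (fun i => (hcomp i).image continuous_fst)
    fun u => by simpa only [indicator_image_fst_eq_eulerChar] using hslice u
  simpa [eulerChar] using this

end EulerCharFactorsThroughIndicators

theorem eulerCharFactorsThroughIndicators_pi :
    ∀ n, EulerCharFactorsThroughIndicators (Fin n → ℝ)
  | 0 => .of_subsingleton
  | n + 1 => (eulerCharFactorsThroughIndicators_pi n).prod_real.of_continuousLinearEquiv
      (.ofFinrankEq (by simp))

theorem eulerCharFactorsThroughIndicators_of_finiteDimensional {E : Type*} [AddCommGroup E]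
    [Module ℝ E] [TopologicalSpace E] [IsTopologicalAddGroup E] [ContinuousSMul ℝ E] [T2Space E]
    [FiniteDimensional ℝ E] : EulerCharFactorsThroughIndicators E :=
  (eulerCharFactorsThroughIndicators_pi (Module.finrank ℝ E)).of_continuousLinearEquiv
    (.ofFinrankEq (by simp))

end EulerCharacteristic

section NonnegSpan

variable {E : Type*} [AddCommGroup E] [Module ℝ E]

def nonnegSpan (G : Finset E) : Set E :=
  {x | ∃ c : E → ℝ, (∀ y, 0 ≤ c y) ∧ x = ∑ y ∈ G, c y • y}

lemma zero_mem_nonnegSpan (G : Finset E) : (0 : E) ∈ nonnegSpan G :=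
  ⟨0, fun _ => le_rfl, by simp⟩

lemma smul_mem_nonnegSpan {G : Finset E} {x : E} (hx : x ∈ nonnegSpan G) {s : ℝ} (hs : 0 ≤ s) :
    s • x ∈ nonnegSpan G := by
  obtain ⟨c, hc, rfl⟩ := hx
  exact ⟨s • c, fun y => mul_nonneg hs (hc y), by simp [Finset.smul_sum, smul_smul]⟩

lemma convex_nonnegSpan (G : Finset E) : Convex ℝ (nonnegSpan G) := by
  rintro _ ⟨c, hc, rfl⟩ _ ⟨c', hc', rfl⟩ a b ha hb -
  refine ⟨a • c + b • c', fun y => ?_, ?_⟩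
  · exact add_nonneg (mul_nonneg ha (hc y)) (mul_nonneg hb (hc' y))
  · simp [Finset.smul_sum, add_smul, smul_smul, Finset.sum_add_distrib]

lemma nonnegSpan_mono {S G : Finset E} (h : S ⊆ G) : nonnegSpan S ⊆ nonnegSpan G := by
  rintro _ ⟨c, hc, rfl⟩
  refine ⟨(S : Set E).indicator c, fun y => Set.indicator_nonneg (fun y _ => hc y) y, ?_⟩
  rw [← Finset.sum_indicator_subset _ h]
  exact Finset.sum_congr rfl fun y _ => Set.indicator_smul_apply_left _ c id y

lemma exists_pos_relation_of_not_linearIndepOn {G : Finset E}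
    (hG : ¬ LinearIndepOn ℝ id (G : Set E)) :
    ∃ d : E → ℝ, (∀ y ∉ G, d y = 0) ∧ ∑ y ∈ G, d y • y = 0 ∧ ∃ y ∈ G, 0 < d y := by
  obtain ⟨f, hf, y, hyG, hfy⟩ := not_linearIndepOn_finset_iff.mp hG
  have of_pos : ∀ g : E → ℝ, ∑ z ∈ G, g z • z = 0 → 0 < g y →
      ∃ d : E → ℝ, (∀ y ∉ G, d y = 0) ∧ ∑ y ∈ G, d y • y = 0 ∧ ∃ y ∈ G, 0 < d y := by
    intro g hg hgy
    refine ⟨(G : Set E).indicator g, fun z hz => Set.indicator_of_notMem hz g, ?_,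
      y, hyG, by rwa [Set.indicator_of_mem (Finset.mem_coe.2 hyG)]⟩
    rwa [Finset.sum_congr rfl fun z hz => by rw [Set.indicator_of_mem (Finset.mem_coe.2 hz)]]
  rcases hfy.lt_or_gt with hneg | hpos
  · exact of_pos (-f) (by simpa using hf) (by simpa using hneg)
  · exact of_pos f hf hpos

lemma exists_mem_nonnegSpan_erase_of_not_linearIndepOn [DecidableEq E] {G : Finset E}
    (hG : ¬ LinearIndepOn ℝ id (G : Set E)) {x : E} (hx : x ∈ nonnegSpan G) :
    ∃ y₀ ∈ G, x ∈ nonnegSpan (G.erase y₀) := by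
  obtain ⟨d, hd_supp, hd_rel, y, hyG, hdy⟩ := exists_pos_relation_of_not_linearIndepOn hG
  obtain ⟨c, hc, rfl⟩ := hx
  -- move along the relation `d` until the first coefficient of `c` reaches zero
  obtain ⟨y₀, hy₀, hmin⟩ := (G.filter (0 < d ·)).exists_min_image (fun y => c y / d y)
    ⟨y, Finset.mem_filter.2 ⟨hyG, hdy⟩⟩
  obtain ⟨hy₀G, hdy₀⟩ := Finset.mem_filter.1 hy₀
  set t := c y₀ / d y₀
  have ht : 0 ≤ t := div_nonneg (hc y₀) hdy₀.le
  refine ⟨y₀, hy₀G, c - t • d, fun z => ?_, ?_⟩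
  · rcases le_or_gt (d z) 0 with hdz | hdz
    · simp only [Pi.sub_apply, Pi.smul_apply, smul_eq_mul]
      nlinarith [hc z]
    · have hzG : z ∈ G := by_contra fun hz => hdz.ne' (hd_supp z hz)
      have := hmin z (Finset.mem_filter.2 ⟨hzG, hdz⟩)
      simp only [Pi.sub_apply, Pi.smul_apply, smul_eq_mul, sub_nonneg]
      exact (le_div_iff₀ hdz).1 this
  · have hy₀_zero : (c - t • d) y₀ • y₀ = 0 := by
      simp [t, div_mul_cancel₀ _ hdy₀.ne']
    rw [Finset.sum_erase (f := fun z => (c - t • d) z • z) _ hy₀_zero]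
    simp only [Pi.sub_apply, Pi.smul_apply, smul_eq_mul, sub_smul, mul_smul,
      Finset.sum_sub_distrib, ← Finset.smul_sum, hd_rel, smul_zero, sub_zero]

lemma exists_linearIndepOn_subset_of_mem_nonnegSpan {x : E} (G : Finset E)
    (hx : x ∈ nonnegSpan G) :
    ∃ S ⊆ G, LinearIndepOn ℝ id (S : Set E) ∧ x ∈ nonnegSpan S := by
  classical
  induction G using Finset.strongInduction with
  | H G ih =>
    by_cases hG : LinearIndepOn ℝ id (G : Set E)
    · exact ⟨G, subset_rfl, hG, hx⟩
    · obtain ⟨y₀, hy₀, hx'⟩ := exists_mem_nonnegSpan_erase_of_not_linearIndepOn hG hx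
      obtain ⟨S, hS, hli, hxS⟩ := ih _ (Finset.erase_ssubset hy₀) hx'
      exact ⟨S, hS.trans (G.erase_subset y₀), hli, hxS⟩

lemma nonnegSpan_eq_image_fintypeLinearCombination (S : Finset E) :
    nonnegSpan S =
      Fintype.linearCombination ℝ (fun i : (S : Set E) => (i : E)) '' {c | ∀ i, 0 ≤ c i} := by
  classical
  ext x
  constructor
  · rintro ⟨c, hc, rfl⟩
    exact ⟨fun i => c i, fun i => hc i, Finset.sum_coe_sort S fun y => c y • y⟩
  · rintro ⟨c, hc, rfl⟩
    rw [Fintype.linearCombination_apply]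
    refine ⟨fun y => if h : y ∈ S then c ⟨y, h⟩ else 0, fun y => ?_, ?_⟩
    · dsimp only
      split_ifs
      exacts [hc _, le_rfl]
    · rw [← Finset.sum_coe_sort S]
      exact Finset.sum_congr rfl fun i _ => by simp

variable [TopologicalSpace E] [IsTopologicalAddGroup E] [ContinuousSMul ℝ E] [T2Space E]

lemma isClosed_nonnegSpan_of_linearIndepOn {S : Finset E} (hS : LinearIndepOn ℝ id (S : Set E)) :
    IsClosed (nonnegSpan S) := by
  rw [nonnegSpan_eq_image_fintypeLinearCombination]
  refine (LinearMap.isClosedEmbedding_of_injective ?_).isClosedMap _ ?_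
  · exact LinearMap.ker_eq_bot.2 hS.fintypeLinearCombination_injective
  · simpa only [Set.ofPred_forall] using
      isClosed_iInter fun i => isClosed_le continuous_const (continuous_apply i)

lemma isClosed_nonnegSpan (G : Finset E) : IsClosed (nonnegSpan G) := by
  classical
  have hcover : nonnegSpan G =
      ⋃ S ∈ (G.powerset.filter fun S => LinearIndepOn ℝ id (S : Set E) : Finset (Finset E)),
        nonnegSpan S := by
    refine subset_antisymm (fun x hx => ?_) (Set.iUnion₂_subset fun S hS => ?_)
    · obtain ⟨S, hSG, hli, hxS⟩ := exists_linearIndepOn_subset_of_mem_nonnegSpan G hx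
      exact Set.mem_biUnion (Finset.mem_filter.2 ⟨Finset.mem_powerset.2 hSG, hli⟩) hxS
    · exact nonnegSpan_mono (Finset.mem_powerset.1 (Finset.mem_filter.1 hS).1)
  rw [hcover]
  exact Set.Finite.isClosed_biUnion (Finset.finite_toSet _)
    fun S hS => isClosed_nonnegSpan_of_linearIndepOn (Finset.mem_filter.1 hS).2

end NonnegSpan

section Duality

lemma sum_mul_indicator_inter_eq_zero {ι E : Type*} [Fintype ι] {K : ι → Set E} {α : ι → ℝ}
    (h : ∀ x, ∑ i, α i * (K i).indicator (fun _ => 1) x = 0) (A : Set E) (x : E) :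
    ∑ i, α i * (K i ∩ A).indicator (fun _ => 1) x = 0 := by
  have hinter : ∀ i, (K i ∩ A).indicator (fun _ => (1 : ℝ)) x =
      (K i).indicator (fun _ => 1) x * A.indicator (fun _ => 1) x :=
    fun i => congrFun (inter_indicator_one (s := K i) (t := A)) x
  simp_rw [hinter, ← mul_assoc, ← Finset.sum_mul, h x, zero_mul]

lemma exists_closedBall_inter_nonempty {ι X : Type*} [Finite ι] [PseudoMetricSpace X]
    (S : ι → Set X) (x₀ : X) :
    ∃ R, ∀ i, (S i).Nonempty → (S i ∩ Metric.closedBall x₀ R).Nonempty := by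
  classical
  obtain ⟨R, hR⟩ :=
    (Set.finite_range fun i => if h : (S i).Nonempty then dist h.some x₀ else 0).bddAbove
  refine ⟨R, fun i hi => ⟨hi.some, hi.some_mem, ?_⟩⟩
  simpa [hi] using hR (mem_range_self i)

variable {E : Type*} [NormedAddCommGroup E] [InnerProductSpace ℝ E]

lemma forall_inner_nonneg_iff_not_nonempty_inter {C : Set E}
    (hC : ∀ y ∈ C, ∀ s : ℝ, 0 ≤ s → s • y ∈ C) (x : E) :
    (∀ y ∈ C, 0 ≤ ⟪x, y⟫) ↔ ¬ (C ∩ {w | ⟪x, w⟫ ≤ -1}).Nonempty := by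
  constructor
  · rintro hx ⟨y, hyC, hy : ⟪x, y⟫ ≤ -1⟩
    linarith [hx y hyC]
  · intro hne y hy
    by_contra! hneg
    refine hne ⟨(-⟪x, y⟫⁻¹) • y, hC y hy _ (neg_nonneg.2 (inv_nonpos.2 hneg.le)), ?_⟩
    simp [real_inner_smul_right, inv_mul_cancel₀ hneg.ne]

lemma indicator_dual_eq_one_sub_eulerChar {C : Set E} (hC : ∀ y ∈ C, ∀ s : ℝ, 0 ≤ s → s • y ∈ C)
    {x : E} {B : Set E}
    (hB : (C ∩ {w | ⟪x, w⟫ ≤ -1}).Nonempty → (C ∩ {w | ⟪x, w⟫ ≤ -1} ∩ B).Nonempty) :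
    {z | ∀ y ∈ C, 0 ≤ ⟪z, y⟫}.indicator (fun _ => (1 : ℝ)) x =
      1 - eulerChar (C ∩ {w | ⟪x, w⟫ ≤ -1} ∩ B) := by
  have hx : x ∈ {z | ∀ y ∈ C, 0 ≤ ⟪z, y⟫} ↔ ¬(C ∩ {w | ⟪x, w⟫ ≤ -1}).Nonempty :=
    forall_inner_nonneg_iff_not_nonempty_inter hC x
  by_cases h : (C ∩ {w | ⟪x, w⟫ ≤ -1}).Nonempty
  · rw [indicator_of_notMem fun hxi => hx.1 hxi h, eulerChar, if_pos (hB h), sub_self]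
  · rw [indicator_of_mem (hx.2 h), eulerChar, if_neg fun ⟨y, hy, _⟩ => h ⟨y, hy⟩, sub_zero]

end Duality

/-- the polarity map on characteristic functions of polyhedral cones extends to
an involution of the group they span: if a signed combination `∑ αᵢ 𝟙_{Cᵢ}` of characteristic
functions of polyhedral cones vanishes identically, then so does the dual combination
`∑ αᵢ 𝟙_{Cᵢ*}`. -/
theorem cone_polarity_involution
    {m : ℕ} (n : ℕ)
    (C : Fin n → Set (EuclideanSpace ℝ (Fin m)))
    -- each `Cᵢ` is a polyhedral cone: all nonnegative combinations of a finite set of vectors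
    (hC : ∀ i, ∃ G : Finset (EuclideanSpace ℝ (Fin m)),
      C i = {x | ∃ c : EuclideanSpace ℝ (Fin m) → ℝ,
        (∀ y, 0 ≤ c y) ∧ x = ∑ y ∈ G, c y • y})
    (α : Fin n → ℤ)
    -- `∑ αᵢ 𝟙_{Cᵢ} = 0`
    (hzero : ∀ x : EuclideanSpace ℝ (Fin m),
      ∑ i, (α i : ℝ) * Set.indicator (C i) (fun _ => (1 : ℝ)) x = 0) :
    -- then `∑ αᵢ 𝟙_{Cᵢ*} = 0`, where `Cᵢ* = {x | ⟨x, y⟩ ≥ 0 for all y ∈ Cᵢ}` is the dual cone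
    ∀ x : EuclideanSpace ℝ (Fin m),
      ∑ i, (α i : ℝ) *
        Set.indicator {z : EuclideanSpace ℝ (Fin m) | ∀ y ∈ C i, 0 ≤ (inner ℝ z y : ℝ)}
          (fun _ => (1 : ℝ)) x = 0 := by
  intro x
  choose G hG using hC
  obtain rfl : C = fun i => nonnegSpan (G i) := funext hG
  obtain ⟨R, hR⟩ :=
    exists_closedBall_inter_nonempty (fun i => nonnegSpan (G i) ∩ {w | ⟪x, w⟫ ≤ -1}) 0
  have hα : ∑ i, (α i : ℝ) = 0 := by simpa [zero_mem_nonnegSpan] using hzero 0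
  have hχ : ∑ i, (α i : ℝ) *
      eulerChar (nonnegSpan (G i) ∩ {w | ⟪x, w⟫ ≤ -1} ∩ Metric.closedBall 0 R) = 0 := by
    refine eulerCharFactorsThroughIndicators_of_finiteDimensional (Fin n) _ _ (fun i => ?_)
      (fun i => ?_) (sum_mul_indicator_inter_eq_zero (sum_mul_indicator_inter_eq_zero hzero _) _)
    · exact ((convex_nonnegSpan _).inter (convex_halfSpace_le (innerₛₗ ℝ x).isLinear _)).inter
        (convex_closedBall _ _)
    · refine (isCompact_closedBall _ _).of_isClosed_subset ?_ inter_subset_right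
      exact ((isClosed_nonnegSpan _).inter (isClosed_le (by fun_prop) continuous_const)).inter
        Metric.isClosed_closedBall
  have hdual := fun i => indicator_dual_eq_one_sub_eulerChar
    (fun y hy s hs => smul_mem_nonnegSpan (G := G i) hy hs) (hR i)
  simp_rw [hdual, mul_sub, Finset.sum_sub_distrib, hχ, mul_one, hα, sub_zero]
end

section
/- Let d ≥ 1, let v_0, …, v_{d-2} ∈ ℝ^d, and let x_1, x_2, x_3 ∈ ℝ^d be collinear points such that each of the three simplices Δ_{ab} = conv{v_0,…,v_{d-2}, x_a, x_b} (for {a,b} = {1,2}, {2,3}, {3,1}) is a non-codegenerate d-simplex. For i ≤ d−2, let w_i be the dual vertex of Δ_{ab} opposite the facet hyperplane through the points other than v_i, and let y_a be the dual vertex of Δ_{ab} opposite the facet hyperplane omitting x_a. Then the points w_0, …, w_{d-2} are the same for all three simplices (⟨w_i, v_j⟩ = 1 for j ≠ i and ⟨w_i, x_a⟩ = 1 for all a), each y_a satisfies ⟨y_a, v_j⟩ = 1 for all j and ⟨y_a, x_a⟩ = 1, and y_1, y_2, y_3 are collinear. -/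
/-!
The dual vertex opposite a facet exists because the `d` vertices of the facet are linearly
independent, so some linear functional, i.e. some `⟪w, ·⟫`, equals `1` on all of them.
A point `w i` built from `Δ₀₁` also works for the other two simplices: `⟪w i, ·⟫ = 1` at `x 0`
and `x 1` forces it on their line, which contains `x 2`. The points `y a` all lie on the
affine subspace `{y | ∀ j, ⟪y, v j⟫ = 1}`, whose direction `(span v)ᗮ` has dimension
`d - (d - 1) = 1`.
-/

open Module Set

section

variable {E : Type*} [NormedAddCommGroup E] [InnerProductSpace ℝ E]

theorem LinearIndependent.exists_inner_eq_one [FiniteDimensional ℝ E] {ι : Type*} {b : ι → E}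
    (h : LinearIndependent ℝ b) : ∃ w : E, ∀ i, inner ℝ w (b i) = (1 : ℝ) := by
  obtain ⟨φ, hφ⟩ := Module.exists_dual_forall_apply_eq_one (h.linearIndepOn univ)
  refine ⟨(InnerProductSpace.toDual ℝ E).symm (LinearMap.toContinuousLinearMap φ), fun i ↦ ?_⟩
  rw [InnerProductSpace.toDual_symm_apply]
  exact hφ i (mem_univ i)

theorem inner_eq_of_mem_affineSpan_pair {w p a b : E} {c : ℝ} (hp : p ∈ line[ℝ, a, b])
    (ha : inner ℝ w a = c) (hb : inner ℝ w b = c) : inner ℝ w p = c := by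
  obtain ⟨r, rfl⟩ := mem_affineSpan_pair_iff_exists_lineMap_eq.1 hp
  rw [AffineMap.lineMap_apply, vsub_eq_sub, vadd_eq_add, inner_add_right, inner_smul_right,
    inner_sub_right, ha, hb]
  ring

theorem collinear_of_forall_inner_eq [FiniteDimensional ℝ E] {ι : Type*} {v : ι → E}
    {c : ι → ℝ} {s : Set E} (hs : ∀ y ∈ s, ∀ j, inner ℝ y (v j) = c j)
    (hdim : finrank ℝ E ≤ finrank ℝ (Submodule.span ℝ (range v)) + 1) : Collinear ℝ s := by
  have hle : vectorSpan ℝ s ≤ (Submodule.span ℝ (range v))ᗮ := by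
    rw [vectorSpan_def, ← Submodule.isOrtho_iff_le, Submodule.isOrtho_span]
    rintro _ ⟨y₁, h₁, y₂, h₂, rfl⟩ _ ⟨j, rfl⟩
    simp only [vsub_eq_sub, inner_sub_left, hs y₁ h₁ j, hs y₂ h₂ j, sub_self]
  rw [collinear_iff_finrank_le_one]
  have := Submodule.finrank_mono hle
  have := (Submodule.span ℝ (range v)).finrank_add_finrank_orthogonal
  omega

end

theorem dual_of_stellar_relation_general
    {d : ℕ}
    (v : Fin (d - 1) → EuclideanSpace ℝ (Fin d))
    (x : Fin 3 → EuclideanSpace ℝ (Fin d))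
    -- `x 0`, `x 1`, `x 2` are collinear
    (hcol : Collinear ℝ (Set.range x))
    -- each `Δ_{ab} = conv {v…, x a, x b}` is a `d`-simplex
    (haff : ∀ a b : Fin 3, a ≠ b →
      AffineIndependent ℝ (Sum.elim v ![x a, x b] : Fin (d - 1) ⊕ Fin 2 →
        EuclideanSpace ℝ (Fin d)))
    -- which is non-codegenerate
    (hncd : ∀ a b : Fin 3, a ≠ b → ∀ k : Fin (d - 1) ⊕ Fin 2,
      LinearIndependent ℝ
        (fun j : {j : Fin (d - 1) ⊕ Fin 2 // j ≠ k} => Sum.elim v ![x a, x b] j.1)) :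
    ∃ (w : Fin (d - 1) → EuclideanSpace ℝ (Fin d)) (y : Fin 3 → EuclideanSpace ℝ (Fin d)),
      -- the `w i` are the common dual vertices of all three simplices:
      (∀ i j, j ≠ i → inner ℝ (w i) (v j) = (1 : ℝ)) ∧
      (∀ i a, inner ℝ (w i) (x a) = (1 : ℝ)) ∧
      -- each `y a` lies on the hyperplanes `H_{v j}` for all `j` and on `H_{x a}`:
      (∀ a j, inner ℝ (y a) (v j) = (1 : ℝ)) ∧
      (∀ a, inner ℝ (y a) (x a) = (1 : ℝ)) ∧
      -- and `y 0, y 1, y 2` are collinear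
      Collinear ℝ (Set.range y) := by
  have h01 : (0 : Fin 3) ≠ 1 := by decide
  have hx : x 0 ≠ x 1 := fun h ↦ by
    simpa using (haff 0 1 h01).injective (a₁ := .inr 0) (a₂ := .inr 1) (by simpa using h)
  have hline (a : Fin 3) : x a ∈ line[ℝ, x 0, x 1] :=
    hcol.mem_affineSpan_of_mem_of_ne (mem_range_self 0) (mem_range_self 1) (mem_range_self a) hx
  choose w hw using fun i ↦ (hncd 0 1 h01 (.inl i)).exists_inner_eq_one
  choose y hy using fun a : Fin 3 ↦
    (hncd a (a + 1) (by revert a; decide) (.inr 1)).exists_inner_eq_one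
  have hyv (a j) : inner ℝ (y a) (v j) = (1 : ℝ) := by simpa using hy a ⟨.inl j, by simp⟩
  have hv : LinearIndependent ℝ v :=
    (hncd 0 1 h01 (.inr 0)).comp (fun i ↦ ⟨.inl i, by simp⟩) fun i i' h ↦ by simpa using h
  refine ⟨w, y, fun i j hji ↦ by simpa using hw i ⟨.inl j, by simpa⟩, fun i a ↦ ?_, hyv,
    fun a ↦ by simpa using hy a ⟨.inr 0, by simp⟩, ?_⟩
  · exact inner_eq_of_mem_affineSpan_pair (hline a) (by simpa using hw i ⟨.inr 0, by simp⟩)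
      (by simpa using hw i ⟨.inr 1, by simp⟩)
  · refine collinear_of_forall_inner_eq (forall_mem_range.2 hyv) ?_
    rw [finrank_span_eq_card hv, finrank_euclideanSpace_fin, Fintype.card_fin]
    omega

/-- let `x 0, x 1, x 2` be collinear points such that each of the three
simplices `Δ_{ab} = conv {v 0, …, v (d-2), x a, x b}` is a non-codegenerate `d`-simplex.
Then the dual vertices `w i` opposite the facets omitting `v i` are the same for all three
simplices (`⟨w i, v j⟩ = 1` for `j ≠ i` and `⟨w i, x a⟩ = 1` for all `a`), each dual vertex
`y a` satisfies `⟨y a, v j⟩ = 1` for all `j` and `⟨y a, x a⟩ = 1`, and `y 0, y 1, y 2` are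
collinear. -/
theorem dual_of_stellar_relation
    {d : ℕ} (hd : 1 ≤ d)
    (v : Fin (d - 1) → EuclideanSpace ℝ (Fin d))
    (x : Fin 3 → EuclideanSpace ℝ (Fin d))
    -- `x 0`, `x 1`, `x 2` are collinear
    (hcol : Collinear ℝ (Set.range x))
    -- each `Δ_{ab} = conv {v…, x a, x b}` is a `d`-simplex
    (haff : ∀ a b : Fin 3, a ≠ b →
      AffineIndependent ℝ (Sum.elim v ![x a, x b] : Fin (d - 1) ⊕ Fin 2 →
        EuclideanSpace ℝ (Fin d)))
    -- which is non-codegenerate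
    (hncd : ∀ a b : Fin 3, a ≠ b → ∀ k : Fin (d - 1) ⊕ Fin 2,
      LinearIndependent ℝ
        (fun j : {j : Fin (d - 1) ⊕ Fin 2 // j ≠ k} => Sum.elim v ![x a, x b] j.1)) :
    ∃ (w : Fin (d - 1) → EuclideanSpace ℝ (Fin d)) (y : Fin 3 → EuclideanSpace ℝ (Fin d)),
      -- the `w i` are the common dual vertices of all three simplices:
      (∀ i j, j ≠ i → inner ℝ (w i) (v j) = (1 : ℝ)) ∧
      (∀ i a, inner ℝ (w i) (x a) = (1 : ℝ)) ∧
      -- each `y a` lies on the hyperplanes `H_{v j}` for all `j` and on `H_{x a}`: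
      (∀ a j, inner ℝ (y a) (v j) = (1 : ℝ)) ∧
      (∀ a, inner ℝ (y a) (x a) = (1 : ℝ)) ∧
      -- and `y 0, y 1, y 2` are collinear
      Collinear ℝ (Set.range y) :=
  dual_of_stellar_relation_general v x hcol haff hncd
end
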